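/- Let N ≥ 3 and b > 0, and define W : ℝ^N → ℝ by W(x) = (1 + |x|^{2+b}/((N+b)(N−2)))^{−(N−2)/(2+b)}. Then W is positive, radial, twice continuously differentiable on ℝ^N, W ∈ L^{2N/(N−2)}(ℝ^N) with ∇W ∈ L²(ℝ^N), and W solves the energy-critical equation −ΔW(x) = |x|^b W(x)^{(N+2+2b)/(N−2)} for every x ∈ ℝ^N. -/

import Mathlib

open MeasureTheory Filter
open scoped ENNReal NNReal BigOperators

noncomputable section

abbrev Euc (N : ℕ) := EuclideanSpace ℝ (Fin N)

def Radial {N : ℕ} {α : Type*} (f : Euc N → α) : Prop :=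
  ∀ x y : Euc N, ‖x‖ = ‖y‖ → f x = f y

/-- The Laplacian `Δφ = ∑ᵢ ∂ᵢᵢ φ`. -/
noncomputable def lap {N : ℕ} (φ : Euc N → ℝ) (x : Euc N) : ℝ :=
  ∑ i : Fin N, iteratedFDeriv ℝ 2 φ x ![EuclideanSpace.single i 1, EuclideanSpace.single i 1]

noncomputable def Wfun (N : ℕ) (b : ℝ) (x : Euc N) : ℝ :=
  (1 + ‖x‖ ^ (2 + b) / (((N : ℝ) + b) * ((N : ℝ) - 2))) ^ (-(((N : ℝ) - 2) / (2 + b)))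

/-!
Write `W = A ^ (-p)` with `A x = 1 + ‖x‖ ^ (2 + b) / ((N + b) (N - 2))` and
`p = (N - 2) / (2 + b)` (`Wfun.base` and `Wfun.exponent`). Then
`∇W x = -(N + b)⁻¹ A(x) ^ (-p - 1) ‖x‖ ^ b x`. Since `b > 0` the field `‖x‖ ^ b x` is `C¹`
(its derivative `‖x‖ ^ b I + b ‖x‖ ^ (b - 2) x ⊗ x` is `O(‖x‖ ^ b)`), so `W` is `C²` also at the
origin. The Laplacian is the trace of the derivative of `∇W`; using
`div (‖x‖ ^ b x) = (N + b) ‖x‖ ^ b` and `(p + 1) (2 + b) = N + b` it collapses to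
`-‖x‖ ^ b A ^ (-p - 2) = -‖x‖ ^ b W ^ ((N + 2 + 2b) / (N - 2))`. Finally
`A x ≳ (1 + ‖x‖) ^ (2 + b)` gives `W ≲ (1 + ‖x‖) ^ (2 - N)` and `|∇W| ≲ (1 + ‖x‖) ^ (1 - N)`,
which lie in `L^{2N/(N-2)}` and `L²` respectively.
-/

section NormRpowSmulSelf

open Asymptotics Topology InnerProductSpace

variable {E : Type*} [NormedAddCommGroup E] [InnerProductSpace ℝ E] {b : ℝ}

theorem hasFDerivAt_norm_rpow_of_ne_zero (p : ℝ) {x : E} (hx : x ≠ 0) :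
    HasFDerivAt (fun y : E ↦ ‖y‖ ^ p) ((p * ‖x‖ ^ (p - 2)) • innerSL ℝ x) x := by
  apply HasStrictFDerivAt.hasFDerivAt
  convert! (hasStrictFDerivAt_norm_sq x).rpow_const (p := p / 2) (by simp [hx]) using 0
  simp_rw [← Real.rpow_natCast_mul (norm_nonneg _), ← Nat.cast_smul_eq_nsmul ℝ, smul_smul]
  ring_nf

theorem hasFDerivAt_norm_rpow_smul_self (hb : 0 < b) (x : E) :
    HasFDerivAt (fun y : E ↦ ‖y‖ ^ b • y)
      (‖x‖ ^ b • ContinuousLinearMap.id ℝ E + (b * ‖x‖ ^ (b - 2)) • rankOne ℝ x x) x := by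
  rcases eq_or_ne x 0 with rfl | hx
  · simp only [norm_zero, Real.zero_rpow hb.ne', zero_smul, map_zero, smul_zero, add_zero]
    refine .of_isLittleO ?_
    have hsmall : Tendsto (fun y : E ↦ ‖y‖ ^ b) (𝓝 0) (𝓝 0) := by
      simpa [Real.zero_rpow hb.ne'] using
        (continuous_norm.rpow_const fun _ ↦ Or.inr hb.le).tendsto (0 : E)
    simpa using ((isLittleO_one_iff ℝ).mpr hsmall).smul_isBigO (isBigO_refl (fun y : E ↦ y) _)
  · refine ((hasFDerivAt_norm_rpow_of_ne_zero b hx).smul (hasFDerivAt_id x)).congr_fderiv ?_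
    ext v
    simp [rankOne_apply, smul_smul, mul_comm]

theorem norm_fderiv_norm_rpow_smul_self_le (hb : 0 < b) (x : E) :
    ‖‖x‖ ^ b • ContinuousLinearMap.id ℝ E + (b * ‖x‖ ^ (b - 2)) • rankOne ℝ x x‖
      ≤ (1 + b) * ‖x‖ ^ b := by
  rcases eq_or_ne x 0 with rfl | hx
  · simp [Real.zero_rpow hb.ne']
  have hrank : ‖(b * ‖x‖ ^ (b - 2)) • rankOne ℝ x x‖ = b * ‖x‖ ^ b := by
    rw [norm_smul, norm_rankOne, Real.norm_of_nonneg (by positivity), mul_assoc,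
      ← sq, ← Real.rpow_natCast, ← Real.rpow_add (norm_pos_iff.mpr hx)]
    norm_num
  calc _ ≤ ‖‖x‖ ^ b • ContinuousLinearMap.id ℝ E‖ + ‖(b * ‖x‖ ^ (b - 2)) • rankOne ℝ x x‖ :=
        norm_add_le _ _
    _ ≤ ‖x‖ ^ b + b * ‖x‖ ^ b := by
        rw [hrank, norm_smul, Real.norm_of_nonneg (by positivity)]
        gcongr
        exact mul_le_of_le_one_right (by positivity) ContinuousLinearMap.norm_id_le
    _ = (1 + b) * ‖x‖ ^ b := by ring

theorem contDiff_norm_rpow_smul_self (hb : 0 < b) : ContDiff ℝ 1 (fun y : E ↦ ‖y‖ ^ b • y) := by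
  rw [contDiff_one_iff_fderiv]
  refine ⟨fun x ↦ (hasFDerivAt_norm_rpow_smul_self hb x).differentiableAt, ?_⟩
  rw [funext fun x ↦ (hasFDerivAt_norm_rpow_smul_self (E := E) hb x).fderiv,
    continuous_iff_continuousAt]
  intro x
  rcases eq_or_ne x 0 with rfl | hx
  · have hlim : Tendsto (fun y : E ↦ (1 + b) * ‖y‖ ^ b) (𝓝 0) (𝓝 0) := by
      simpa [Real.zero_rpow hb.ne'] using
        ((continuous_norm.rpow_const fun _ ↦ Or.inr hb.le).const_mul (1 + b)).tendsto (0 : E)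
    have h0 : ‖(0 : E)‖ ^ b • ContinuousLinearMap.id ℝ E
        + (b * ‖(0 : E)‖ ^ (b - 2)) • rankOne ℝ (0 : E) 0 = 0 := by
      simp [Real.zero_rpow hb.ne']
    rw [ContinuousAt, h0]
    exact squeeze_zero_norm (norm_fderiv_norm_rpow_smul_self_le hb) hlim
  · have hrank : Continuous fun y : E ↦ rankOne ℝ y y := by
      simp only [rankOne_def]
      fun_prop
    have hscal : ContinuousAt (fun y : E ↦ b * ‖y‖ ^ (b - 2)) x := by
      fun_prop (discharger := simp [hx])
    have hid : ContinuousAt (fun y : E ↦ ‖y‖ ^ b • ContinuousLinearMap.id ℝ E) x := by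
      fun_prop (discharger := simp [hx])
    exact hid.add (hscal.smul hrank.continuousAt)

theorem trace_fderiv_norm_rpow_smul_self [FiniteDimensional ℝ E] (hb : 0 < b) (x : E) :
    LinearMap.trace ℝ E
        (‖x‖ ^ b • ContinuousLinearMap.id ℝ E + (b * ‖x‖ ^ (b - 2)) • rankOne ℝ x x)
      = (Module.finrank ℝ E + b) * ‖x‖ ^ b := by
  have hpow : ‖x‖ ^ (b - 2) * ‖x‖ ^ 2 = ‖x‖ ^ b := by
    rcases eq_or_ne x 0 with rfl | hx
    · simp [Real.zero_rpow hb.ne']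
    rw [← Real.rpow_natCast, ← Real.rpow_add (norm_pos_iff.mpr hx)]
    norm_num
  simp only [ContinuousLinearMap.coe_id, map_add, map_smul, LinearMap.trace_id, trace_rankOne,
    real_inner_self_eq_norm_sq, smul_eq_mul]
  linear_combination b * hpow

end NormRpowSmulSelf

theorem lap_eq_trace {N : ℕ} {φ : Euc N → ℝ} {G : Euc N → Euc N} {G' : Euc N →L[ℝ] Euc N}
    {x : Euc N} (hφ : ∀ y, HasFDerivAt φ (innerSL ℝ (G y)) y) (hG : HasFDerivAt G G' x) :
    lap φ x = LinearMap.trace ℝ (Euc N) G' := by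
  have hφ₂ : fderiv ℝ (fderiv ℝ φ) x = (innerSL ℝ).comp G' := by
    rw [funext fun y ↦ (hφ y).fderiv]
    exact ((innerSL ℝ).hasFDerivAt.comp x hG).fderiv
  rw [lap, LinearMap.trace_eq_sum_inner _ (EuclideanSpace.basisFun (Fin N) ℝ)]
  refine Finset.sum_congr rfl fun i _ ↦ ?_
  simp [iteratedFDeriv_two_apply, hφ₂, real_inner_comm]

theorem memLp_of_norm_le_mul_one_add_norm_rpow_neg {E F : Type*} [NormedAddCommGroup E]
    [NormedSpace ℝ E] [FiniteDimensional ℝ E] [MeasurableSpace E] [BorelSpace E]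
    {μ : Measure E} [μ.IsAddHaarMeasure] [NormedAddCommGroup F] {f : E → F} (hf : Continuous f)
    {p : ℝ≥0∞} (hp₀ : p ≠ 0) (hp : p ≠ ∞) {C r : ℝ}
    (hdim : (Module.finrank ℝ E : ℝ) < r * p.toReal) (hfC : ∀ x, ‖f x‖ ≤ C * (1 + ‖x‖) ^ (-r)) :
    MemLp f p μ := by
  have hdecay : MemLp (fun x : E ↦ (1 + ‖x‖) ^ (-r)) p μ := by
    rw [← memLp_norm_rpow_iff (Measurable.aestronglyMeasurable (by fun_prop)) hp₀ hp,
      ENNReal.div_self hp₀ hp, memLp_one_iff_integrable]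
    refine (integrable_one_add_norm hdim).congr (ae_of_all _ fun x ↦ ?_)
    have hx : 0 < 1 + ‖x‖ := by positivity
    simp only [Real.norm_of_nonneg (Real.rpow_nonneg hx.le _), ← Real.rpow_mul hx.le, neg_mul]
  refine (hdecay.const_mul C).of_le hf.aestronglyMeasurable (ae_of_all _ fun x ↦ ?_)
  exact (hfC x).trans ((le_abs_self _).trans_eq (Real.norm_eq_abs _).symm)

namespace Wfun

open InnerProductSpace

variable {N : ℕ} {b : ℝ}

def base (N : ℕ) (b : ℝ) (x : Euc N) : ℝ :=
  1 + ‖x‖ ^ (2 + b) / (((N : ℝ) + b) * ((N : ℝ) - 2))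

def exponent (N : ℕ) (b : ℝ) : ℝ := ((N : ℝ) - 2) / (2 + b)

theorem eq_base_rpow (x : Euc N) : Wfun N b x = base N b x ^ (-exponent N b) := rfl

def grad (N : ℕ) (b : ℝ) (x : Euc N) : Euc N :=
  (-((N : ℝ) + b)⁻¹ * base N b x ^ (-exponent N b - 1)) • (‖x‖ ^ b • x)

theorem denom_pos (hN : 3 ≤ N) (hb : 0 < b) : 0 < ((N : ℝ) + b) * ((N : ℝ) - 2) := by
  have hN' : (3 : ℝ) ≤ N := by exact_mod_cast hN
  exact mul_pos (by linarith) (by linarith)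

theorem exponent_nonneg (hN : 3 ≤ N) (hb : 0 < b) : 0 ≤ exponent N b := by
  have hN' : (3 : ℝ) ≤ N := by exact_mod_cast hN
  exact div_nonneg (by linarith) (by linarith)

theorem one_le_base (hN : 3 ≤ N) (hb : 0 < b) (x : Euc N) : 1 ≤ base N b x :=
  le_add_of_nonneg_right (div_nonneg (by positivity) (denom_pos hN hb).le)

theorem base_pos (hN : 3 ≤ N) (hb : 0 < b) (x : Euc N) : 0 < base N b x :=
  zero_lt_one.trans_le (one_le_base hN hb x)

theorem norm_rpow_mul_sq (hN : 3 ≤ N) (hb : 0 < b) (x : Euc N) :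
    ‖x‖ ^ b * ‖x‖ ^ 2 = ((N : ℝ) + b) * ((N : ℝ) - 2) * (base N b x - 1) := by
  rw [base, add_sub_cancel_left, mul_div_cancel₀ _ (denom_pos hN hb).ne', ← Real.rpow_natCast,
    ← Real.rpow_add' (norm_nonneg x) (by positivity), Nat.cast_ofNat, add_comm]

theorem hasFDerivAt_base (hb : 0 < b) (x : Euc N) :
    HasFDerivAt (base N b)
      (((2 + b) / (((N : ℝ) + b) * ((N : ℝ) - 2)) * ‖x‖ ^ b) • innerSL ℝ x) x := by
  have h := ((hasFDerivAt_norm_rpow x (by linarith : (1 : ℝ) < 2 + b)).mul_const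
    (((N : ℝ) + b) * ((N : ℝ) - 2))⁻¹).const_add 1
  rw [add_sub_cancel_left, smul_smul] at h
  have hfun : base N b = fun y ↦ 1 + ‖y‖ ^ (2 + b) * (((N : ℝ) + b) * ((N : ℝ) - 2))⁻¹ := by
    funext y
    rw [base, div_eq_mul_inv]
  rw [hfun]
  refine h.congr_fderiv (congrArg (· • innerSL ℝ x) ?_)
  ring

theorem contDiff_base (hb : 0 < b) : ContDiff ℝ 1 (base N b) :=
  contDiff_const.add ((contDiff_norm_rpow (by linarith)).div_const _)

theorem hasFDerivAt (hN : 3 ≤ N) (hb : 0 < b) (x : Euc N) :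
    HasFDerivAt (Wfun N b) (innerSL ℝ (grad N b x)) x := by
  have h := (hasFDerivAt_base hb x).rpow_const (p := -exponent N b)
    (Or.inl (base_pos hN hb x).ne')
  refine h.congr_fderiv ?_
  ext v
  have hN' : (3 : ℝ) ≤ N := by exact_mod_cast hN
  have hN2 : (N : ℝ) - 2 ≠ 0 := by linarith
  have hNb : (N : ℝ) + b ≠ 0 := by linarith
  have h2b : 2 + b ≠ 0 := by linarith
  simp only [grad, FunLike.coe_smul, Pi.smul_apply, innerSL_apply_apply, smul_eq_mul,
    real_inner_smul_left]
  generalize base N b x ^ (-exponent N b - 1) = B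
  rw [exponent]
  field_simp

theorem fderiv_eq (hN : 3 ≤ N) (hb : 0 < b) :
    fderiv ℝ (Wfun N b) = fun x ↦ innerSL ℝ (grad N b x) :=
  funext fun x ↦ (hasFDerivAt hN hb x).fderiv

theorem contDiff_grad (hN : 3 ≤ N) (hb : 0 < b) : ContDiff ℝ 1 (grad N b) :=
  (contDiff_const.mul ((contDiff_base hb).rpow_const_of_ne fun x ↦ (base_pos hN hb x).ne')).smul
    (contDiff_norm_rpow_smul_self hb)

theorem contDiff_two (hN : 3 ≤ N) (hb : 0 < b) : ContDiff ℝ 2 (Wfun N b) := by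
  rw [show (2 : WithTop ℕ∞) = 1 + 1 from rfl, contDiff_succ_iff_fderiv, fderiv_eq hN hb]
  exact ⟨fun x ↦ (hasFDerivAt hN hb x).differentiableAt, by simp,
    (innerSL ℝ).contDiff.comp (contDiff_grad hN hb)⟩

theorem lap_eq (hN : 3 ≤ N) (hb : 0 < b) (x : Euc N) :
    lap (Wfun N b) x = -‖x‖ ^ b * base N b x ^ (-exponent N b - 2) := by
  have hscal := ((hasFDerivAt_base hb x).rpow_const (p := -exponent N b - 1)
    (Or.inl (base_pos hN hb x).ne')).const_mul (-((N : ℝ) + b)⁻¹)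
  have hgrad := hscal.smul (hasFDerivAt_norm_rpow_smul_self hb x)
  rw [lap_eq_trace (hasFDerivAt hN hb) hgrad]
  simp only [ContinuousLinearMap.toLinearMap_add, ContinuousLinearMap.toLinearMap_smul,
    ContinuousLinearMap.coe_smulRight, map_add, map_smul, trace_fderiv_norm_rpow_smul_self hb,
    finrank_euclideanSpace_fin, LinearMap.trace_smulRight, LinearMap.smul_apply,
    ContinuousLinearMap.toLinearMap_innerSL_apply, innerₛₗ_apply_apply,
    real_inner_self_eq_norm_sq, smul_eq_mul]
  have hN' : (3 : ℝ) ≤ N := by exact_mod_cast hN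
  have hN2 : (N : ℝ) - 2 ≠ 0 := by linarith
  have hNb : (N : ℝ) + b ≠ 0 := by linarith
  have h2b : 2 + b ≠ 0 := by linarith
  have hpow : base N b x ^ (-exponent N b - 1)
      = base N b x * base N b x ^ (-exponent N b - 2) := by
    rw [show -exponent N b - 1 = 1 + (-exponent N b - 2) by ring,
      Real.rpow_add (base_pos hN hb x), Real.rpow_one]
  rw [show -exponent N b - 1 - 1 = -exponent N b - 2 by ring, hpow]
  generalize base N b x ^ (-exponent N b - 2) = P
  rw [exponent]
  field_simp
  linear_combination P * ‖x‖ ^ b * ((N : ℝ) + b) * norm_rpow_mul_sq hN hb x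

theorem rpow_critical_exponent (hN : 3 ≤ N) (hb : 0 < b) (x : Euc N) :
    Wfun N b x ^ (((N : ℝ) + 2 + 2 * b) / ((N : ℝ) - 2)) = base N b x ^ (-exponent N b - 2) := by
  have hN' : (3 : ℝ) ≤ N := by exact_mod_cast hN
  have hN2 : (N : ℝ) - 2 ≠ 0 := by linarith
  have h2b : 2 + b ≠ 0 := by linarith
  rw [eq_base_rpow, ← Real.rpow_mul (base_pos hN hb x).le, exponent]
  congr 1
  field_simp
  ring

theorem one_add_norm_rpow_le (hN : 3 ≤ N) (hb : 0 < b) (x : Euc N) :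
    (1 + ‖x‖) ^ (2 + b) ≤ 2 ^ (2 + b) * max 1 (((N : ℝ) + b) * ((N : ℝ) - 2)) * base N b x := by
  set c := ((N : ℝ) + b) * ((N : ℝ) - 2)
  have hq : 0 ≤ 2 + b := by linarith
  have hbase := one_le_base hN hb x
  have hmax : max 1 (‖x‖ ^ (2 + b)) ≤ max 1 c * base N b x := by
    refine max_le (one_le_mul_of_one_le_of_one_le (le_max_left _ _) hbase) ?_
    calc ‖x‖ ^ (2 + b) = c * (base N b x - 1) := by
          rw [base, add_sub_cancel_left, mul_div_cancel₀ _ (denom_pos hN hb).ne']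
      _ ≤ max 1 c * base N b x :=
          mul_le_mul (le_max_right 1 c) (by linarith) (by linarith) (by positivity)
  calc (1 + ‖x‖) ^ (2 + b) ≤ (2 * max 1 ‖x‖) ^ (2 + b) := by
        gcongr
        linarith [le_max_left 1 ‖x‖, le_max_right 1 ‖x‖]
    _ = 2 ^ (2 + b) * max 1 (‖x‖ ^ (2 + b)) := by
        rw [Real.mul_rpow zero_le_two (by positivity), Real.rpow_max zero_le_one (norm_nonneg x) hq,
          Real.one_rpow]
    _ ≤ 2 ^ (2 + b) * (max 1 c * base N b x) := by gcongr
    _ = _ := (mul_assoc _ _ _).symm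

theorem exists_base_rpow_neg_le (hN : 3 ≤ N) (hb : 0 < b) {q : ℝ} (hq : 0 ≤ q) :
    ∃ C, ∀ x : Euc N, base N b x ^ (-q) ≤ C * (1 + ‖x‖) ^ (-((2 + b) * q)) := by
  set K := 2 ^ (2 + b) * max 1 (((N : ℝ) + b) * ((N : ℝ) - 2))
  have hK : 0 < K := by positivity
  refine ⟨K ^ q, fun x ↦ ?_⟩
  have hx : 0 < 1 + ‖x‖ := by positivity
  have hlow : (1 + ‖x‖) ^ (2 + b) / K ≤ base N b x :=
    div_le_of_le_mul₀ hK.le (base_pos hN hb x).le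
      ((one_add_norm_rpow_le hN hb x).trans_eq (mul_comm _ _))
  calc base N b x ^ (-q) ≤ ((1 + ‖x‖) ^ (2 + b) / K) ^ (-q) :=
        Real.rpow_le_rpow_of_nonpos (by positivity) hlow (neg_nonpos.mpr hq)
    _ = K ^ q * (1 + ‖x‖) ^ (-((2 + b) * q)) := by
        rw [Real.div_rpow (by positivity) hK.le, ← Real.rpow_mul hx.le, Real.rpow_neg hK.le,
          div_inv_eq_mul, mul_comm, mul_neg]

theorem exists_norm_le (hN : 3 ≤ N) (hb : 0 < b) :
    ∃ C, ∀ x : Euc N, ‖Wfun N b x‖ ≤ C * (1 + ‖x‖) ^ (-((N : ℝ) - 2)) := by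
  obtain ⟨C, hC⟩ := exists_base_rpow_neg_le hN hb (exponent_nonneg hN hb)
  refine ⟨C, fun x ↦ ?_⟩
  have h2b : 2 + b ≠ 0 := by linarith
  rw [eq_base_rpow, Real.norm_of_nonneg (Real.rpow_nonneg (base_pos hN hb x).le _)]
  convert hC x using 4
  rw [exponent]
  field_simp

theorem exists_norm_grad_le (hN : 3 ≤ N) (hb : 0 < b) :
    ∃ C, ∀ x : Euc N, ‖grad N b x‖ ≤ C * (1 + ‖x‖) ^ (-((N : ℝ) - 1)) := by
  obtain ⟨C, hC⟩ := exists_base_rpow_neg_le hN hb (by linarith [exponent_nonneg hN hb] :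
    0 ≤ exponent N b + 1)
  refine ⟨((N : ℝ) + b)⁻¹ * C, fun x ↦ ?_⟩
  have hN' : (3 : ℝ) ≤ N := by exact_mod_cast hN
  have h2b : 2 + b ≠ 0 := by linarith
  have hx : 0 < 1 + ‖x‖ := by positivity
  have hB := Real.rpow_nonneg (base_pos hN hb x).le (-(exponent N b + 1))
  have hnorm : ‖x‖ ^ b * ‖x‖ ≤ (1 + ‖x‖) ^ (b + 1) := by
    rw [← Real.rpow_add_one' (norm_nonneg x) (by positivity)]
    gcongr
    linarith
  have hexp : -((2 + b) * (exponent N b + 1)) + (b + 1) = -((N : ℝ) - 1) := by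
    rw [exponent]
    field_simp
    ring
  calc ‖grad N b x‖
        = ((N : ℝ) + b)⁻¹ * base N b x ^ (-(exponent N b + 1)) * (‖x‖ ^ b * ‖x‖) := by
        rw [grad, norm_smul, norm_smul, norm_mul, norm_neg, ← neg_add',
          Real.norm_of_nonneg (by positivity), Real.norm_of_nonneg hB,
          Real.norm_of_nonneg (by positivity)]
    _ ≤ ((N : ℝ) + b)⁻¹ * base N b x ^ (-(exponent N b + 1)) * (1 + ‖x‖) ^ (b + 1) :=
        mul_le_mul_of_nonneg_left hnorm (mul_nonneg (by positivity) hB)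
    _ ≤ ((N : ℝ) + b)⁻¹ * (C * (1 + ‖x‖) ^ (-((2 + b) * (exponent N b + 1))))
          * (1 + ‖x‖) ^ (b + 1) := by
        gcongr
        exact hC x
    _ = ((N : ℝ) + b)⁻¹ * C * (1 + ‖x‖) ^ (-((N : ℝ) - 1)) := by
        rw [mul_assoc, mul_assoc, ← Real.rpow_add hx, hexp, mul_assoc]

theorem memLp (hN : 3 ≤ N) (hb : 0 < b) :
    MemLp (Wfun N b) (ENNReal.ofReal (2 * (N : ℝ) / ((N : ℝ) - 2))) volume := by
  have hN' : (3 : ℝ) ≤ N := by exact_mod_cast hN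
  have hN2 : 0 < (N : ℝ) - 2 := by linarith
  obtain ⟨C, hC⟩ := exists_norm_le hN hb
  refine memLp_of_norm_le_mul_one_add_norm_rpow_neg (contDiff_two hN hb).continuous
    (by simp only [ne_eq, ENNReal.ofReal_eq_zero, not_le]; positivity) ENNReal.ofReal_ne_top
    ?_ hC
  rw [finrank_euclideanSpace_fin, ENNReal.toReal_ofReal (by positivity),
    mul_div_cancel₀ _ hN2.ne']
  linarith

theorem memLp_fderiv (hN : 3 ≤ N) (hb : 0 < b) :
    MemLp (fun x ↦ fderiv ℝ (Wfun N b) x) 2 volume := by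
  have hN' : (3 : ℝ) ≤ N := by exact_mod_cast hN
  obtain ⟨C, hC⟩ := exists_norm_grad_le hN hb
  rw [fderiv_eq hN hb]
  refine memLp_of_norm_le_mul_one_add_norm_rpow_neg
    ((innerSL ℝ).continuous.comp (contDiff_grad hN hb).continuous) two_ne_zero ENNReal.ofNat_ne_top
    ?_ fun x ↦ (innerSL_apply_norm ℝ (grad N b x)).trans_le (hC x)
  rw [finrank_euclideanSpace_fin, ENNReal.toReal_ofNat]
  linarith

end Wfun

/-- The function `W` is a positive radial `C²` solution of the energy-critical equation
`-ΔW = |x|^b W^{(N+2+2b)/(N-2)}`, with `W ∈ L^{2N/(N-2)}` and `∇W ∈ L²`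
(equations (1.12)–(1.13) of the paper). -/
theorem Wfun_solves_critical_equation (N : ℕ) (b : ℝ) (hN : 3 ≤ N) (hb : 0 < b) :
    (∀ x : Euc N, 0 < Wfun N b x) ∧
      Radial (Wfun N b) ∧
      ContDiff ℝ 2 (Wfun N b) ∧
      MemLp (Wfun N b) (ENNReal.ofReal (2 * (N : ℝ) / ((N : ℝ) - 2))) volume ∧
      MemLp (fun x => fderiv ℝ (Wfun N b) x) 2 volume ∧
      ∀ x : Euc N, -lap (Wfun N b) x =
        ‖x‖ ^ b * Wfun N b x ^ (((N : ℝ) + 2 + 2 * b) / ((N : ℝ) - 2)) := by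
  refine ⟨fun x ↦ Real.rpow_pos_of_pos (Wfun.base_pos hN hb x) _,
    fun x y hxy ↦ by simp only [Wfun, hxy], Wfun.contDiff_two hN hb, Wfun.memLp hN hb,
    Wfun.memLp_fderiv hN hb, fun x ↦ ?_⟩
  rw [Wfun.lap_eq hN hb x, Wfun.rpow_critical_exponent hN hb x]
  ring
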